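/- arXiv:2409.11306 — 3 statements merged into one kernel-verified Lean document; each statement's English description precedes it below -/
import Mathlib

section
/- Let (V,η) be a finite-dimensional real inner product space. The map sending a linear map λ : V → 𝔰𝔬(V) to the alternating bilinear map (v,w) ↦ λ(v)w − λ(w)v is a linear isomorphism from Hom(V, 𝔰𝔬(V)) to the space of alternating bilinear maps V × V → V. -/
/-- The space of `η`-skew-symmetric endomorphisms `𝔰𝔬(V,η)`. -/
def skewEnd {V : Type*} [AddCommGroup V] [Module ℝ V]
    (η : LinearMap.BilinForm ℝ V) : Submodule ℝ (Module.End ℝ V) where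
  carrier := {A | ∀ v w : V, η (A v) w + η v (A w) = 0}
  add_mem' := by
    intro A B hA hB v w
    have h1 := hA v w
    have h2 := hB v w
    simp only [LinearMap.add_apply, map_add]
    linarith
  zero_mem' := by intro v w; simp
  smul_mem' := by
    intro c A hA v w
    have h1 := hA v w
    simp only [LinearMap.smul_apply, map_smul, smul_eq_mul]
    linear_combination c * h1

/-- The space of alternating bilinear maps `V × V → V`. -/
def altMaps (V : Type*) [AddCommGroup V] [Module ℝ V] :
    Submodule ℝ (V →ₗ[ℝ] V →ₗ[ℝ] V) where
  carrier := {B | ∀ v : V, B v v = 0}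
  add_mem' := by intro A B hA hB v; simp [hA v, hB v]
  zero_mem' := by intro v; simp
  smul_mem' := by intro c A hA v; simp [hA v]

set_option maxHeartbeats 1000000 in
/-- the map `λ ↦ ((v,w) ↦ λ(v)w − λ(w)v)` is a linear isomorphism from
`Hom(V, 𝔰𝔬(V))` to the space of alternating bilinear maps `V × V → V`. -/
theorem hom_so_equiv_alternating
    (V : Type*) [AddCommGroup V] [Module ℝ V] [FiniteDimensional ℝ V]
    (η : LinearMap.BilinForm ℝ V)
    (hη_symm : ∀ v w : V, η v w = η w v)
    (hη_nondeg : ∀ v : V, (∀ w : V, η v w = 0) → v = 0) :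
    ∃ e : (V →ₗ[ℝ] skewEnd η) ≃ₗ[ℝ] altMaps V,
      ∀ (lam : V →ₗ[ℝ] skewEnd η) (v w : V),
        ((e lam : V →ₗ[ℝ] V →ₗ[ℝ] V) v w)
          = ((lam v : Module.End ℝ V) w) - ((lam w : Module.End ℝ V) v) := by
  classical
  let F0 : (V →ₗ[ℝ] skewEnd η) →ₗ[ℝ] (V →ₗ[ℝ] V →ₗ[ℝ] V) :=
  { toFun := fun lam => ((skewEnd η).subtype ∘ₗ lam) - ((skewEnd η).subtype ∘ₗ lam).flip
    map_add' := by intro a b; ext v w; simp; abel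
    map_smul' := by intro c a; ext v w; simp [smul_sub] }
  have hF0mem : ∀ lam, F0 lam ∈ altMaps V := by
    intro lam v; simp [F0, altMaps]
  let F : (V →ₗ[ℝ] skewEnd η) →ₗ[ℝ] altMaps V := F0.codRestrict (altMaps V) hF0mem
  have hFapp : ∀ (lam : V →ₗ[ℝ] skewEnd η) (v w : V),
      ((F lam : V →ₗ[ℝ] V →ₗ[ℝ] V) v w)
        = ((lam v : Module.End ℝ V) w) - ((lam w : Module.End ℝ V) v) := by
    intro lam v w
    simp [F, F0, LinearMap.codRestrict]
  -- injectivity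
  have hinj : Function.Injective F := by
    rw [injective_iff_map_eq_zero]
    intro lam hlam
    have hsym : ∀ v w : V, ((lam v : Module.End ℝ V) w) = ((lam w : Module.End ℝ V) v) := by
      intro v w
      have := hFapp lam v w
      rw [hlam] at this
      have h0 : ((0 : altMaps V) : V →ₗ[ℝ] V →ₗ[ℝ] V) v w = 0 := by simp
      rw [h0] at this
      exact sub_eq_zero.mp this.symm
    have hskew : ∀ v w u : V,
        η ((lam v : Module.End ℝ V) w) u = - η ((lam v : Module.End ℝ V) u) w := by
      intro v w u
      have := (lam v).2 w u
      have h2 := hη_symm w ((lam v : Module.End ℝ V) u)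
      linarith
    have hzero : ∀ v w : V, ((lam v : Module.End ℝ V) w) = 0 := by
      intro v w
      apply hη_nondeg
      intro u
      have h1 : η ((lam v : Module.End ℝ V) w) u = η ((lam w : Module.End ℝ V) v) u := by
        rw [hsym]
      have h2 := hskew w v u
      have h3 : η ((lam w : Module.End ℝ V) u) v = η ((lam u : Module.End ℝ V) w) v := by
        rw [hsym]
      have h4 := hskew u w v
      have h5 : η ((lam u : Module.End ℝ V) v) w = η ((lam v : Module.End ℝ V) u) w := by
        rw [hsym]
      have h6 := hskew v u w
      have h7 : η ((lam v : Module.End ℝ V) w) u = η ((lam v : Module.End ℝ V) w) u := rfl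
      linarith [hskew v w u]
    ext v w
    show ((lam v : Module.End ℝ V) w) = _
    simp [hzero v w]
  -- surjectivity
  have hsurj : Function.Surjective F := by
    rintro ⟨T, hT⟩
    have hT' : ∀ v : V, T v v = 0 := hT
    have hTa : ∀ v w : V, T v w = - T w v := by
      intro v w
      have h := hT' (v + w)
      simp only [map_add, LinearMap.add_apply, hT' v, hT' w, zero_add, add_zero] at h
      exact eq_neg_of_add_eq_zero_right h
    have hTe : ∀ a b u : V, η (T a b) u = - η (T b a) u := by
      intro a b u
      rw [hTa a b]; simp
    have hnd : η.Nondegenerate :=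
      ⟨hη_nondeg, fun w hw => hη_nondeg w (fun v => (hη_symm w v).trans (hw v))⟩
    let d := η.toDual hnd
    let fbil : V →ₗ[ℝ] V →ₗ[ℝ] Module.Dual ℝ V :=
      LinearMap.mk₂ ℝ
        (fun v w => (1/2 : ℝ) • (η (T v w) - (η v).comp (T w) + (η w).comp (T.flip v)))
        (by intro v1 v2 w; ext u
            simp only [map_add, LinearMap.add_apply, LinearMap.smul_apply, smul_eq_mul,
              LinearMap.sub_apply, LinearMap.comp_apply, LinearMap.flip_apply]
            ring)
        (by intro c v w; ext u
            simp only [map_smul, LinearMap.smul_apply, smul_eq_mul,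
              LinearMap.sub_apply, LinearMap.add_apply, LinearMap.comp_apply,
              LinearMap.flip_apply]
            ring)
        (by intro v w1 w2; ext u
            simp only [map_add, LinearMap.add_apply, LinearMap.smul_apply, smul_eq_mul,
              LinearMap.sub_apply, LinearMap.comp_apply, LinearMap.flip_apply]
            ring)
        (by intro c v w; ext u
            simp only [map_smul, LinearMap.smul_apply, smul_eq_mul,
              LinearMap.sub_apply, LinearMap.add_apply, LinearMap.comp_apply,
              LinearMap.flip_apply]
            ring)
    let gbil : V →ₗ[ℝ] V →ₗ[ℝ] V := fbil.compr₂ (d.symm : Module.Dual ℝ V →ₗ[ℝ] V)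
    have hg : ∀ v w u : V, η (gbil v w) u
        = (1/2 : ℝ) * (η (T v w) u - η v (T w u) + η w (T u v)) := by
      intro v w u
      have : η (d.symm (fbil v w)) u = fbil v w u :=
        LinearMap.BilinForm.apply_toDual_symm_apply (hB := hnd) (fbil v w) u
      calc η (gbil v w) u = fbil v w u := this
        _ = _ := by
          simp only [fbil, LinearMap.mk₂_apply, LinearMap.smul_apply, smul_eq_mul,
            LinearMap.sub_apply, LinearMap.add_apply, LinearMap.comp_apply,
            LinearMap.flip_apply]
    have hmem : ∀ v : V, gbil v ∈ skewEnd η := by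
      intro v w u
      have h1 := hg v w u
      have h2 := hg v u w
      have e1 := hη_symm w (gbil v u)
      have e2 := hη_symm u (T w v)
      have e3 := hTe w v u
      have e4 := hη_symm v (T w u)
      have e5 := hη_symm v (T u w)
      have e6 := hTe u w v
      have e7 := hη_symm w (T u v)
      have e8 := hTe u v w
      linarith
    let lam0 : V →ₗ[ℝ] skewEnd η := LinearMap.codRestrict (skewEnd η) gbil hmem
    refine ⟨lam0, ?_⟩
    apply Subtype.ext
    apply LinearMap.ext; intro v
    apply LinearMap.ext; intro w
    have hFv : ((F lam0 : altMaps V) : V →ₗ[ℝ] V →ₗ[ℝ] V) v w = gbil v w - gbil w v := by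
      have := hFapp lam0 v w
      simpa [lam0] using this
    show ((F lam0 : altMaps V) : V →ₗ[ℝ] V →ₗ[ℝ] V) v w = T v w
    rw [hFv]
    have key : ∀ u : V, η (gbil v w - gbil w v - T v w) u = 0 := by
      intro u
      have h1 := hg v w u
      have h2 := hg w v u
      simp only [map_sub, LinearMap.sub_apply]
      have e3 := hTe w v u
      have e4 := hη_symm v (T w u)
      have e5 := hη_symm v (T u w)
      have e6 := hTe u w v
      have e7 := hη_symm w (T u v)
      have e8 := hη_symm w (T v u)
      have e9 := hTe u v w
      linarith
    have h0 := hη_nondeg _ key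
    exact sub_eq_zero.mp h0
  refine ⟨LinearEquiv.ofBijective F ⟨hinj, hsurj⟩, ?_⟩
  intro lam v w
  exact hFapp lam v w
end

section
/- Let 𝔰 = V ⊕ S ⊕ 𝔰𝔬(V) be a flat model superalgebra with squaring map κ : ⊙²S → V. Every degree-2 Spencer 2-cocycle α + β + γ of 𝔰 (with α : Λ²V → V, β : V ⊗ S → S, γ : ⊙²S → 𝔰𝔬(V)) is cohomologous to a unique cocycle β′ + γ′ with vanishing Λ²V → V component, given by β′(v,s) = β(v,s) − λ(v)·s and γ′(s,s) = γ(s,s) + λ(κ(s,s)), where λ : V → 𝔰𝔬(V) is the unique map with λ(v)w − λ(w)v = α(v,w). -/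
/-- every degree-2 Spencer 2-cocycle `α + β + γ` of the flat model
superalgebra `𝔰 = V ⊕ S ⊕ 𝔰𝔬(V)` is cohomologous to a unique cocycle `β′ + γ′` with
vanishing `Λ²V → V` component, given by `β′(v,s) = β(v,s) − λ(v)·s`,
`γ′(s,s) = γ(s,s) + λ(κ(s,s))`, where `λ : V → 𝔰𝔬(V)` is the unique map with
`λ(v)w − λ(w)v = α(v,w)`. -/
theorem normalised_spencer_cocycle_unique
    (V S : Type*) [AddCommGroup V] [Module ℝ V] [FiniteDimensional ℝ V]
    [AddCommGroup S] [Module ℝ S]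
    (η : LinearMap.BilinForm ℝ V)
    (hη_symm : ∀ v w : V, η v w = η w v)
    (hη_nondeg : ∀ v : V, (∀ w : V, η v w = 0) → v = 0)
    (ρ : skewEnd η →ₗ[ℝ] Module.End ℝ S)
    (κ : S →ₗ[ℝ] S →ₗ[ℝ] V)
    (hκ_symm : ∀ s t : S, κ s t = κ t s)
    (hκ_equiv : ∀ (A : skewEnd η) (s t : S),
        (A : Module.End ℝ V) (κ s t) = κ (ρ A s) t + κ s (ρ A t))
    (α : V →ₗ[ℝ] V →ₗ[ℝ] V) (h_alt : ∀ v : V, α v v = 0)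
    (β : V →ₗ[ℝ] S →ₗ[ℝ] S)
    (γ : S →ₗ[ℝ] S →ₗ[ℝ] skewEnd η) (hγ_symm : ∀ s t : S, γ s t = γ t s)
    (h_cocycle₁ : ∀ (v : V) (s : S),
        α (κ s s) v + (2 : ℝ) • κ s (β v s) + ((γ s s : Module.End ℝ V) v) = 0)
    (h_cocycle₂ : ∀ s : S, β (κ s s) s + ρ (γ s s) s = 0) :
    ∃! p : (V →ₗ[ℝ] skewEnd η) × ((V →ₗ[ℝ] S →ₗ[ℝ] S) × (S →ₗ[ℝ] S →ₗ[ℝ] skewEnd η)),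
      (∀ v w : V, ((p.1 v : Module.End ℝ V) w) - ((p.1 w : Module.End ℝ V) v) = α v w)
      ∧ (∀ (v : V) (s : S), p.2.1 v s = β v s - ρ (p.1 v) s)
      ∧ (∀ s t : S, p.2.2 s t = γ s t + p.1 (κ s t))
      ∧ (∀ (v : V) (s : S),
          (2 : ℝ) • κ s (p.2.1 v s) + ((p.2.2 s s : Module.End ℝ V) v) = 0)
      ∧ (∀ s : S, p.2.1 (κ s s) s + ρ (p.2.2 s s) s = 0) := by
  classical
  have halt2 : ∀ v w : V, α v w = - α w v := by
    intro v w
    have h := h_alt (v + w)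
    simp only [map_add, LinearMap.add_apply, h_alt] at h
    have h' : α v w + α w v = 0 := by rw [← h]; abel
    exact eq_neg_of_add_eq_zero_left h'
  have e2 : ∀ x y z : V, η (α x y) z + η (α y x) z = 0 := by
    intro x y z
    rw [halt2 x y]
    simp
  have hnd : η.Nondegenerate :=
    ⟨fun v h => hη_nondeg v h, fun w h => hη_nondeg w (fun v => by rw [hη_symm]; exact h v)⟩
  obtain ⟨Λ, hΛα⟩ : ∃ Λ : V →ₗ[ℝ] skewEnd η, ∀ v w : V,
      ((Λ v : Module.End ℝ V) w) - ((Λ w : Module.End ℝ V) v) = α v w := by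
    set μ : V →ₗ[ℝ] V →ₗ[ℝ] Module.Dual ℝ V :=
      LinearMap.mk₂ ℝ
        (fun v w => (2⁻¹:ℝ) • (η (α v w) - (η.flip v).comp (α w) + (η.flip w).comp (α.flip v)))
        (by intro v v' w; ext u; simp; ring)
        (by intro c v w; ext u; simp; ring)
        (by intro v w w'; ext u; simp; ring)
        (by intro c v w; ext u; simp; ring) with hμ
    have hμval : ∀ v w u : V, μ v w u
        = (2⁻¹:ℝ) * (η (α v w) u - η (α w u) v + η (α u v) w) := by
      intro v w u
      simp [hμ, LinearMap.mk₂_apply]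
      ring
    have hμskew : ∀ v w u : V, μ v w u + μ v u w = 0 := by
      intro v w u
      rw [hμval, hμval]
      linarith [e2 v w u, e2 w u v, e2 u v w, e2 v u w, e2 u w v, e2 w v u]
    have hμdiff : ∀ v w u : V, μ v w u - μ w v u = η (α v w) u := by
      intro v w u
      rw [hμval, hμval]
      linarith [e2 v w u, e2 w u v, e2 u v w, e2 v u w, e2 u w v, e2 w v u]
    set Lm : V →ₗ[ℝ] Module.End ℝ V :=
      (LinearMap.llcomp ℝ V (Module.Dual ℝ V) V (η.toDual hnd).symm.toLinearMap).comp μ with hLm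
    have hL : ∀ v w u : V, η (Lm v w) u = μ v w u := by
      intro v w u
      simp only [hLm, LinearMap.comp_apply, LinearMap.llcomp_apply, LinearEquiv.coe_coe]
      exact LinearMap.BilinForm.apply_toDual_symm_apply _ _
    have hmem : ∀ v : V, Lm v ∈ skewEnd η := by
      intro v w u
      calc η (Lm v w) u + η w (Lm v u) = μ v w u + μ v u w := by
            rw [hL, hη_symm w (Lm v u), hL]
        _ = 0 := hμskew v w u
    refine ⟨Lm.codRestrict (skewEnd η) hmem, fun v w => ?_⟩
    have key : ∀ u : V, η (Lm v w - Lm w v - α v w) u = 0 := by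
      intro u
      simp only [map_sub, LinearMap.sub_apply]
      rw [hL, hL]
      linarith [hμdiff v w u]
    have h' : Lm v w - Lm w v - α v w = 0 := hη_nondeg _ key
    exact sub_eq_zero.mp h'
  obtain ⟨β', hβ'app⟩ : ∃ β' : V →ₗ[ℝ] S →ₗ[ℝ] S,
      ∀ (v : V) (s : S), β' v s = β v s - ρ (Λ v) s :=
    ⟨β - ρ.comp Λ, fun v s => by simp⟩
  obtain ⟨γ', hγ'app⟩ : ∃ γ' : S →ₗ[ℝ] S →ₗ[ℝ] skewEnd η,
      ∀ s t : S, γ' s t = γ s t + Λ (κ s t) :=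
    ⟨γ + (LinearMap.llcomp ℝ S V (skewEnd η) Λ).comp κ, fun s t => by simp⟩
  refine ⟨⟨Λ, β', γ'⟩, ⟨hΛα, hβ'app, hγ'app, ?_, ?_⟩, ?_⟩
  · intro v s
    show (2:ℝ) • κ s (β' v s) + ((γ' s s : Module.End ℝ V) v) = 0
    rw [hβ'app, hγ'app]
    have hadd : ((γ s s + Λ (κ s s) : skewEnd η) : Module.End ℝ V) v
        = ((γ s s : Module.End ℝ V) v) + ((Λ (κ s s) : Module.End ℝ V) v) := rfl
    have hexp : (2:ℝ) • κ s (β v s - ρ (Λ v) s)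
        = (2:ℝ) • κ s (β v s) - (2:ℝ) • κ s (ρ (Λ v) s) := by
      rw [map_sub, smul_sub]
    rw [hexp, hadd]
    have hΛv : (Λ v : Module.End ℝ V) (κ s s) = (2:ℝ) • κ s (ρ (Λ v) s) := by
      rw [hκ_equiv (Λ v) s s, hκ_symm (ρ (Λ v) s) s, two_smul]
    have hsplit : ((Λ (κ s s) : Module.End ℝ V) v)
        = α (κ s s) v + (Λ v : Module.End ℝ V) (κ s s) := by
      rw [← hΛα (κ s s) v]; abel
    rw [hsplit, hΛv]
    have h0 := h_cocycle₁ v s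
    rw [← h0]
    abel
  · intro s
    show β' (κ s s) s + ρ (γ' s s) s = 0
    rw [hβ'app, hγ'app, map_add]
    simp only [LinearMap.add_apply]
    rw [← h_cocycle₂ s]
    abel
  · rintro ⟨q1, q2, q3⟩ ⟨ha, hb, hc, -, -⟩
    have hzero : ∀ v w : V,
        (q1 v : Module.End ℝ V) w - (Λ v : Module.End ℝ V) w = 0 := by
      have hsym : ∀ v w : V,
          (q1 v : Module.End ℝ V) w - (Λ v : Module.End ℝ V) w
          = (q1 w : Module.End ℝ V) v - (Λ w : Module.End ℝ V) v := by
        intro v w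
        have h3 : (q1 v : Module.End ℝ V) w - (q1 w : Module.End ℝ V) v
            = (Λ v : Module.End ℝ V) w - (Λ w : Module.End ℝ V) v :=
          (ha v w).trans (hΛα v w).symm
        exact sub_eq_sub_iff_sub_eq_sub.mp h3
      have Tskew : ∀ v w u : V,
          η ((q1 v : Module.End ℝ V) w - (Λ v : Module.End ℝ V) w) u
          = - η ((q1 v : Module.End ℝ V) u - (Λ v : Module.End ℝ V) u) w := by
        intro v w u
        have hq := (q1 v).2 w u
        have hl := (Λ v).2 w u
        have hs1 := hη_symm w ((q1 v : Module.End ℝ V) u)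
        have hs2 := hη_symm w ((Λ v : Module.End ℝ V) u)
        simp only [map_sub, LinearMap.sub_apply]
        linarith
      intro v w
      apply hη_nondeg
      intro u
      have h1 : η ((q1 v : Module.End ℝ V) w - (Λ v : Module.End ℝ V) w) u
          = - η ((q1 v : Module.End ℝ V) w - (Λ v : Module.End ℝ V) w) u := by
        calc η ((q1 v : Module.End ℝ V) w - (Λ v : Module.End ℝ V) w) u
            = η ((q1 w : Module.End ℝ V) v - (Λ w : Module.End ℝ V) v) u := by
              rw [hsym v w]
          _ = - η ((q1 w : Module.End ℝ V) u - (Λ w : Module.End ℝ V) u) v :=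
              Tskew w v u
          _ = - η ((q1 u : Module.End ℝ V) w - (Λ u : Module.End ℝ V) w) v := by
              rw [hsym w u]
          _ = η ((q1 u : Module.End ℝ V) v - (Λ u : Module.End ℝ V) v) w := by
              rw [Tskew u w v]; ring
          _ = η ((q1 v : Module.End ℝ V) u - (Λ v : Module.End ℝ V) u) w := by
              rw [hsym u v]
          _ = - η ((q1 v : Module.End ℝ V) w - (Λ v : Module.End ℝ V) w) u :=
              Tskew v u w
      linarith
    have hq1 : q1 = Λ := by
      refine LinearMap.ext fun v => Subtype.ext (LinearMap.ext fun w => ?_)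
      exact sub_eq_zero.mp (hzero v w)
    subst hq1
    have hq2 : q2 = β' := by
      refine LinearMap.ext fun v => LinearMap.ext fun s => ?_
      exact (hb v s).trans (hβ'app v s).symm
    have hq3 : q3 = γ' := by
      refine LinearMap.ext fun s => LinearMap.ext fun t => ?_
      exact (hc s t).trans (hγ'app s t).symm
    rw [hq2, hq3]
end

section
/- Let 𝔞 = V ⊕ S′ ⊕ 𝔥 be a graded subalgebra of the flat model superalgebra 𝔰 with κ|_{⊙²S′} surjective onto V (e.g. 𝔞 highly supersymmetric). Then the degree-4 Spencer differential ∂ : Hom(Λ²V, 𝔥) → Hom(Λ³V,V) ⊕ Hom(Λ²V⊗S′,S′) ⊕ Hom(V⊗⊙²S′,𝔥) is injective; in particular every θ : Λ²V → 𝔥 with θ(v, κ(s,s)) = 0 for all v ∈ V and s ∈ S′ vanishes, so H^{4,2}(𝔞_-;𝔞) = 0. -/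
theorem LinearMap.map_apply_eq_zero_of_map_apply_self_eq_zero {R M N P : Type*} [CommSemiring R]
    [AddCommMonoid M] [Module R M] [AddCommMonoid N] [Module R N]
    [AddCommMonoid P] [Module R P] [IsAddTorsionFree P]
    (f : N →ₗ[R] P) (κ : M →ₗ[R] M →ₗ[R] N) (hκ : ∀ s t, κ s t = κ t s) {S' : Submodule R M}
    (hf : ∀ s ∈ S', f (κ s s) = 0) {s t : M} (hs : s ∈ S') (ht : t ∈ S') :
    f (κ s t) = 0 := by
  have hpolar : f (κ (s + t) (s + t)) = f (κ s s) + f (κ t t) + 2 • f (κ s t) := by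
    simp only [map_add, LinearMap.add_apply, hκ t s, two_nsmul]
    abel
  rw [hf _ (S'.add_mem hs ht), hf s hs, hf t ht, zero_add, zero_add, eq_comm] at hpolar
  exact two_nsmul_eq_zero.mp hpolar

theorem spencer_42_vanishes_general
    (V S H : Type*) [AddCommGroup V] [Module ℝ V]
    [AddCommGroup S] [Module ℝ S] [AddCommGroup H] [Module ℝ H]
    (κ : S →ₗ[ℝ] S →ₗ[ℝ] V)
    (hκ_symm : ∀ s t : S, κ s t = κ t s)
    (S' : Submodule ℝ S)
    (h_surj : Submodule.span ℝ {v : V | ∃ s ∈ S', ∃ t ∈ S', κ s t = v} = ⊤)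
    (θ : V →ₗ[ℝ] V →ₗ[ℝ] H)
    (hθ : ∀ (v : V) (s : S), s ∈ S' → θ v (κ s s) = 0) :
    θ = 0 := by
  have : IsAddTorsionFree H := .of_isTorsionFree ℝ H
  ext1 v
  refine LinearMap.ext_on h_surj ?_
  rintro _ ⟨s, hs, t, ht, rfl⟩
  exact (θ v).map_apply_eq_zero_of_map_apply_self_eq_zero κ hκ_symm (hθ v) hs ht

/-- let `𝔞 = V ⊕ S′ ⊕ 𝔥` be a graded subalgebra of the flat model
superalgebra with `κ|_{⊙²S′}` surjective onto `V` (e.g. `𝔞` highly supersymmetric).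
Then the degree-4 Spencer differential is injective on `Hom(Λ²V, 𝔥)`: every alternating
`θ : Λ²V → 𝔥` with `θ(v, κ(s,s)) = 0` for all `v ∈ V` and `s ∈ S′` vanishes; in
particular `H^{4,2}(𝔞_-;𝔞) = 0`. -/
theorem spencer_42_vanishes
    (V S H : Type*) [AddCommGroup V] [Module ℝ V]
    [AddCommGroup S] [Module ℝ S] [AddCommGroup H] [Module ℝ H]
    (κ : S →ₗ[ℝ] S →ₗ[ℝ] V)
    (hκ_symm : ∀ s t : S, κ s t = κ t s)
    (S' : Submodule ℝ S)
    (h_surj : Submodule.span ℝ {v : V | ∃ s ∈ S', ∃ t ∈ S', κ s t = v} = ⊤)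
    (θ : V →ₗ[ℝ] V →ₗ[ℝ] H)
    (h_alt : ∀ v : V, θ v v = 0)
    (hθ : ∀ (v : V) (s : S), s ∈ S' → θ v (κ s s) = 0) :
    θ = 0 :=
  spencer_42_vanishes_general V S H κ hκ_symm S' h_surj θ hθ
end
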